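/- (Araki–Lieb–Thirring, case r = 1/2) For n×n real symmetric positive semi-definite matrices A and B, tr[(A^{1/2} B A^{1/2})^{1/2}] ≥ tr(A^{1/2} B^{1/2}), with equality if and only if AB = BA. -/

import Mathlib

/-!
With `X = A^{1/2}`, `Y = B^{1/2}` and `M = Y X` we have `X B X = Mᴴ M`, so the right-hand side is
`tr |M|` while `tr (X Y) = tr M`. Diagonalise `|M| = U diag(σ) Uᴴ`: the columns of `N = Uᴴ M U`
have Euclidean norms `σᵢ`, hence `Nᵢᵢ ≤ σᵢ` and `tr M ≤ tr |M|`, with equality only if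
`N = diag(σ)`, i.e. `M = |M| ≥ 0`. Finally the product `Y X` of two positive semidefinite
matrices is positive semidefinite exactly when `X` and `Y` commute, i.e. when `A` and `B` do.
-/

open Classical in
/-- The positive semi-definite square root of a positive semi-definite real matrix
(junk value `0` if the matrix is not positive semi-definite). -/
noncomputable def psdSqrt {n : ℕ} (M : Matrix (Fin n) (Fin n) ℝ) : Matrix (Fin n) (Fin n) ℝ :=
  if h : M.PosSemidef then
    (h.1.eigenvectorUnitary : Matrix (Fin n) (Fin n) ℝ) *
      Matrix.diagonal ((RCLike.ofReal : ℝ → ℝ) ∘ Real.sqrt ∘ h.1.eigenvalues) *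
      (star h.1.eigenvectorUnitary : Matrix (Fin n) (Fin n) ℝ)
  else 0

open Matrix
open scoped MatrixOrder

section
variable {A : Type*} [Ring A] [StarRing A] [TopologicalSpace A] [Algebra ℝ A]
  [ContinuousFunctionalCalculus ℝ A IsSelfAdjoint] [IsTopologicalRing A] [T2Space A]
  [PartialOrder A] [StarOrderedRing A] [NonnegSpectrumClass ℝ A]

theorem CFC.commute_sqrt_sqrt_iff {a b : A} (ha : 0 ≤ a) (hb : 0 ≤ b) :
    Commute (CFC.sqrt a) (CFC.sqrt b) ↔ Commute a b := by
  refine ⟨fun h => ?_, fun h => ?_⟩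
  · rw [← CFC.sqrt_mul_sqrt_self a ha, ← CFC.sqrt_mul_sqrt_self b hb]
    exact (h.mul_left h).mul_right (h.mul_left h)
  · rw [CFC.sqrt_eq_cfc, CFC.sqrt_eq_cfc]
    exact ((h.cfc_nnreal _).symm.cfc_nnreal _).symm

end

variable {ι : Type*} [Fintype ι] [DecidableEq ι]

namespace Matrix

theorem sum_sq_apply_eq_of_conjTranspose_mul_self_eq_diagonal {N : Matrix ι ι ℝ} {σ : ι → ℝ}
    (h : Nᴴ * N = diagonal (σ ^ 2)) (i : ι) : ∑ k, N k i ^ 2 = σ i ^ 2 := by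
  simpa [mul_apply, sq] using congrFun (congrFun h i) i

theorem apply_self_le_of_conjTranspose_mul_self_eq_diagonal {N : Matrix ι ι ℝ} {σ : ι → ℝ}
    (hσ : 0 ≤ σ) (h : Nᴴ * N = diagonal (σ ^ 2)) (i : ι) : N i i ≤ σ i := by
  have hcol := sum_sq_apply_eq_of_conjTranspose_mul_self_eq_diagonal h i
  have : N i i ^ 2 ≤ σ i ^ 2 :=
    hcol ▸ Finset.single_le_sum (fun k _ => sq_nonneg (N k i)) (Finset.mem_univ i)
  exact (abs_le_of_sq_le_sq' this (hσ i)).2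

theorem eq_diagonal_of_conjTranspose_mul_self_eq_diagonal {N : Matrix ι ι ℝ} {σ : ι → ℝ}
    (h : Nᴴ * N = diagonal (σ ^ 2)) (hdiag : ∀ i, N i i = σ i) : N = diagonal σ := by
  ext k i
  rcases eq_or_ne k i with rfl | hki
  · simp [hdiag]
  have hcol := sum_sq_apply_eq_of_conjTranspose_mul_self_eq_diagonal h i
  rw [← Finset.add_sum_erase _ _ (Finset.mem_univ i), hdiag, add_eq_left,
    Finset.sum_eq_zero_iff_of_nonneg fun _ _ => sq_nonneg _] at hcol
  simpa [hki] using hcol k (by simp [hki])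

theorem trace_le_sum_of_conjTranspose_mul_self_eq_diagonal {N : Matrix ι ι ℝ} {σ : ι → ℝ}
    (hσ : 0 ≤ σ) (h : Nᴴ * N = diagonal (σ ^ 2)) : N.trace ≤ ∑ i, σ i :=
  Finset.sum_le_sum fun i _ => apply_self_le_of_conjTranspose_mul_self_eq_diagonal hσ h i

theorem eq_diagonal_of_trace_eq_sum {N : Matrix ι ι ℝ} {σ : ι → ℝ}
    (hσ : 0 ≤ σ) (h : Nᴴ * N = diagonal (σ ^ 2)) (htr : N.trace = ∑ i, σ i) :
    N = diagonal σ := by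
  refine eq_diagonal_of_conjTranspose_mul_self_eq_diagonal h fun i => ?_
  have hle i := apply_self_le_of_conjTranspose_mul_self_eq_diagonal hσ h i
  have hzero := (Finset.sum_eq_zero_iff_of_nonneg fun i _ => sub_nonneg.2 (hle i)).1
    (by rw [Finset.sum_sub_distrib, ← htr]; exact sub_self _) i (Finset.mem_univ i)
  linarith

open Unitary in
theorem trace_le_trace_of_conjTranspose_mul_self_eq {M S : Matrix ι ι ℝ} (hS : S.PosSemidef)
    (h : Mᴴ * M = S * S) : M.trace ≤ S.trace ∧ (M.trace = S.trace → M = S) := by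
  set φ := conjStarAlgAut ℝ _ (star hS.1.eigenvectorUnitary)
  set σ := hS.1.eigenvalues
  have hD : φ S = diagonal σ := by
    simpa [φ, σ] using hS.1.conjStarAlgAut_star_eigenvectorUnitary
  have hN : (φ M)ᴴ * φ M = diagonal (σ ^ 2) := by
    rw [← star_eq_conjTranspose, ← map_star, ← map_mul, star_eq_conjTranspose, h, map_mul, hD,
      diagonal_mul_diagonal, sq]
    rfl
  have htr (X : Matrix ι ι ℝ) : (φ X).trace = X.trace := by
    rw [conjStarAlgAut_star_apply, trace_mul_cycle, ← Unitary.coe_star, Unitary.coe_mul_star_self,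
      one_mul]
  have htrS : S.trace = ∑ i, σ i := by simpa using hS.1.trace_eq_sum_eigenvalues
  refine ⟨?_, fun heq => EquivLike.injective φ ?_⟩
  · rw [← htr, htrS]
    exact trace_le_sum_of_conjTranspose_mul_self_eq_diagonal hS.eigenvalues_nonneg hN
  · rw [hD]
    exact eq_diagonal_of_trace_eq_sum hS.eigenvalues_nonneg hN (by rw [htr, heq, htrS])

theorem trace_le_trace_cfcAbs (M : Matrix ι ι ℝ) : M.trace ≤ (CFC.abs M).trace :=
  (trace_le_trace_of_conjTranspose_mul_self_eq (nonneg_iff_posSemidef.1 (CFC.abs_nonneg M))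
    (CFC.abs_mul_abs M).symm).1

theorem trace_cfcAbs_eq_trace_iff (M : Matrix ι ι ℝ) : (CFC.abs M).trace = M.trace ↔ 0 ≤ M := by
  refine ⟨fun h => ?_, fun h => by rw [CFC.abs_of_nonneg M h]⟩
  have hM := (trace_le_trace_of_conjTranspose_mul_self_eq
    (nonneg_iff_posSemidef.1 (CFC.abs_nonneg M)) (CFC.abs_mul_abs M).symm).2 h.symm
  exact hM ▸ CFC.abs_nonneg M

end Matrix

theorem psdSqrt_eq_cfcSqrt {n : ℕ} {M : Matrix (Fin n) (Fin n) ℝ} (hM : 0 ≤ M) :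
    psdSqrt M = CFC.sqrt M := by
  have hM' := nonneg_iff_posSemidef.1 hM
  rw [psdSqrt, dif_pos hM', CFC.sqrt_eq_real_sqrt M hM, cfcₙ_eq_cfc, hM'.1.cfc_eq, IsHermitian.cfc,
    Unitary.conjStarAlgAut_apply]

/-- Araki–Lieb–Thirring, case `r = 1/2`: for positive semi-definite `A, B`,
`tr[(A^{1/2} B A^{1/2})^{1/2}] ≥ tr(A^{1/2} B^{1/2})`, with equality iff `A B = B A`. -/
theorem stmt5 {n : ℕ} (A B : Matrix (Fin n) (Fin n) ℝ)
    (hA : A.PosSemidef) (hB : B.PosSemidef) :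
    (psdSqrt A * psdSqrt B).trace ≤ (psdSqrt (psdSqrt A * B * psdSqrt A)).trace ∧
      ((psdSqrt (psdSqrt A * B * psdSqrt A)).trace = (psdSqrt A * psdSqrt B).trace
        ↔ A * B = B * A) := by
  rw [← nonneg_iff_posSemidef] at hA hB
  rw [psdSqrt_eq_cfcSqrt hA, psdSqrt_eq_cfcSqrt hB]
  set X := CFC.sqrt A
  set Y := CFC.sqrt B
  have hX : 0 ≤ X := CFC.sqrt_nonneg A
  have hY : 0 ≤ Y := CFC.sqrt_nonneg B
  have hXBX : X * B * X = star (Y * X) * (Y * X) := by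
    rw [star_mul, hX.isSelfAdjoint.star_eq, hY.isSelfAdjoint.star_eq, ← CFC.sqrt_mul_sqrt_self B hB]
    noncomm_ring
  rw [hXBX, psdSqrt_eq_cfcSqrt (star_mul_self_nonneg _), ← CFC.abs, trace_mul_comm X Y]
  refine ⟨trace_le_trace_cfcAbs _, ?_⟩
  rw [trace_cfcAbs_eq_trace_iff, ← commute_iff_mul_nonneg hY hX, CFC.commute_sqrt_sqrt_iff hB hA]
  exact Commute.symm_iff
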